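/- Perfect simulation: for every M in Λ_{00a}, if M reduces to N at depth n in Λ_{00a}, then ⟨M⟩_a reduces to ⟨N⟩_a in ℓΛ∞ by one step at a level containing exactly n occurrences of the coinductive-box marker; conversely, every reduction step from ⟨M⟩_a is the image of a step from M. -/

import Mathlib

namespace LLInf

/-- Node labels of preterms of the linear infinitary λ-calculus ℓΛ∞. -/
inductive Shape where
  | var (x : ℕ)
  | app
  | labs (x : ℕ)
  | iabs (x : ℕ)
  | cabs (x : ℕ)
  | ibox
  | cbox
deriving DecidableEq

/-- Preterms: possibly infinite trees, encoded by their (partial) position function. -/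
def T : Type := List ℕ → Option Shape

def mk0 (s : Shape) : T := fun p => if p = [] then some s else none

def mk1 (s : Shape) (M : T) : T := fun p =>
  match p with
  | [] => some s
  | 0 :: q => M q
  | _ => none

def mk2 (M N : T) : T := fun p =>
  match p with
  | [] => some Shape.app
  | 0 :: q => M q
  | 1 :: q => N q
  | _ => none

def child (M : T) (i : ℕ) : T := fun p => M (i :: p)

def bindsX (x : ℕ) : Option Shape → Bool
  | some (Shape.labs y) => y == x
  | some (Shape.iabs y) => y == x
  | some (Shape.cabs y) => y == x
  | _ => false

/-- Capture-avoiding (shadowing-respecting) substitution on positional preterms. -/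
def substF (x : ℕ) (N : T) : T → List ℕ → Option Shape
  | M, [] => if M [] = some (Shape.var x) then N [] else M []
  | M, i :: q =>
      if M [] = some (Shape.var x) then N (i :: q)
      else if bindsX x (M []) then M (i :: q)
      else substF x N (child M i) q
termination_by M p => p.length

def subst (x : ℕ) (N M : T) : T := fun p => substF x N M p

def FreeAt (x : ℕ) : T → List ℕ → Prop
  | M, [] => M [] = some (Shape.var x)
  | M, i :: q => bindsX x (M []) = false ∧ FreeAt x (child M i) q
termination_by M p => p.length

/-- `x` occurs free in `M`. -/
def Free (x : ℕ) (M : T) : Prop := ∃ p, FreeAt x M p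

def arity : Shape → ℕ
  | Shape.var _ => 0
  | Shape.app => 2
  | _ => 1

/-- The position function is a coherent (constructor-generated) tree. -/
def IsPre (M : T) : Prop :=
  (∃ s, M [] = some s) ∧
  (∀ p t, M p = some t → ∀ i, (∃ s, M (p ++ [i]) = some s) ↔ i < arity t) ∧
  (∀ p q, M p = none → M (p ++ q) = none)

/-- Basic reduction of ℓΛ∞. -/
inductive Basic : T → T → Prop
  | lin (x : ℕ) (M N : T) :
      Basic (mk2 (mk1 (Shape.labs x) M) N) (subst x N M)
  | ind (x : ℕ) (M N : T) :
      Basic (mk2 (mk1 (Shape.iabs x) M) (mk1 Shape.ibox N)) (subst x N M)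
  | coi (x : ℕ) (M N : T) :
      Basic (mk2 (mk1 (Shape.cabs x) M) (mk1 Shape.cbox N)) (subst x N M)

/-- One-step reduction, indexed by the level: the list of boxes crossed,
`false` for an inductive box, `true` for a coinductive box. -/
inductive Red : List Bool → T → T → Prop
  | base {M N} : Basic M N → Red [] M N
  | appL {s M N} (P) : Red s M N → Red s (mk2 M P) (mk2 N P)
  | appR {s M N} (P) : Red s M N → Red s (mk2 P M) (mk2 P N)
  | labs {s M N} (x) : Red s M N → Red s (mk1 (Shape.labs x) M) (mk1 (Shape.labs x) N)
  | iabs {s M N} (x) : Red s M N → Red s (mk1 (Shape.iabs x) M) (mk1 (Shape.iabs x) N)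
  | cabs {s M N} (x) : Red s M N → Red s (mk1 (Shape.cabs x) M) (mk1 (Shape.cabs x) N)
  | ibox {s M N} : Red s M N → Red (false :: s) (mk1 Shape.ibox M) (mk1 Shape.ibox N)
  | cbox {s M N} : Red s M N → Red (true :: s) (mk1 Shape.cbox M) (mk1 Shape.cbox N)

def Red' (M N : T) : Prop := ∃ s, Red s M N

/-- Reduction at depth `n`: at a level crossing exactly `n` coinductive boxes. -/
def RedAt (n : ℕ) (M N : T) : Prop := ∃ s, s.count true = n ∧ Red s M N

def Star : T → T → Prop := Relation.ReflTransGen Red'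

/-! ### Environments and well-formation for ℓΛ∞ -/

inductive Pat where
  | lin | ind | coi
deriving DecidableEq

def Env : Type := ℕ → Option Pat

def Env.upd (Γ : Env) (x : ℕ) (p : Option Pat) : Env :=
  fun y => if y = x then p else Γ y

def Env.union (Γ Δ : Env) : Env := fun y => (Γ y).orElse (fun _ => Δ y)

def NoLin (Γ : Env) : Prop := ∀ y, Γ y ≠ some Pat.lin

def OnlyLinAt (Γ : Env) (x : ℕ) : Prop :=
  Γ x = some Pat.lin ∧ ∀ y, y ≠ x → Γ y ≠ some Pat.lin

/-- Splitting of an environment: nonlinear entries are shared, linear ones split. -/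
def Split (Γ Γ₁ Γ₂ : Env) : Prop := ∀ y,
  (Γ₁ y = Γ y ∧ Γ₂ y = Γ y ∧ Γ y ≠ some Pat.lin) ∨
  (Γ y = some Pat.lin ∧
    ((Γ₁ y = some Pat.lin ∧ Γ₂ y = none) ∨ (Γ₂ y = some Pat.lin ∧ Γ₁ y = none)))

/-- The inductive rules of the mixed formal system of ℓΛ∞, with `R` the
judgments provided by the coinductive layer. -/
inductive WFStep (R : Env → T → Prop) : Env → T → Prop
  | base {Γ M} : R Γ M → WFStep R Γ M
  | vl {Γ} (x) : OnlyLinAt Γ x → WFStep R Γ (mk0 (Shape.var x))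
  | vi {Γ} (x) : NoLin Γ → Γ x = some Pat.ind → WFStep R Γ (mk0 (Shape.var x))
  | vc {Γ} (x) : NoLin Γ → Γ x = some Pat.coi → WFStep R Γ (mk0 (Shape.var x))
  | app {Γ Γ₁ Γ₂ M N} : Split Γ Γ₁ Γ₂ → WFStep R Γ₁ M → WFStep R Γ₂ N →
      WFStep R Γ (mk2 M N)
  | ll {Γ x M} : Γ x = none → WFStep R (Γ.upd x (some Pat.lin)) M →
      WFStep R Γ (mk1 (Shape.labs x) M)
  | li {Γ x M} : Γ x = none → WFStep R (Γ.upd x (some Pat.ind)) M →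
      WFStep R Γ (mk1 (Shape.iabs x) M)
  | lc {Γ x M} : Γ x = none → WFStep R (Γ.upd x (some Pat.coi)) M →
      WFStep R Γ (mk1 (Shape.cabs x) M)
  | mi {Γ M} : NoLin Γ → WFStep R Γ M → WFStep R Γ (mk1 Shape.ibox M)

/-- One application of the unique coinductive rule (mc). -/
def CoStep (S : Env → T → Prop) (Γ : Env) (M : T) : Prop :=
  NoLin Γ ∧ ∃ N, M = mk1 Shape.cbox N ∧ S Γ N

/-- Well-formation in ℓΛ∞: greatest fixed point of Ind ∘ Coind, presented via
consistent sets. -/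
def WF (Γ : Env) (M : T) : Prop :=
  ∃ S : Env → T → Prop, (∀ Δ N, S Δ N → WFStep (CoStep S) Δ N) ∧ S Γ M

/-! ### Infinitary reduction ⇒ and its auxiliary relation ⤳ -/

/-- One application of the coinductive ⇒-rule. `true` marks ⇒-judgments,
`false` marks ⤳-judgments. -/
def IRCo (S : Bool → T → T → Prop) (b : Bool) (M L : T) : Prop :=
  b = true ∧ ∃ N, Star M N ∧ S false N L

/-- The inductive ⤳-rules. -/
inductive IRInd (R : Bool → T → T → Prop) : Bool → T → T → Prop
  | base {b M N} : R b M N → IRInd R b M N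
  | varr (x) : IRInd R false (mk0 (Shape.var x)) (mk0 (Shape.var x))
  | app {M N P Q} : IRInd R false M N → IRInd R false P Q →
      IRInd R false (mk2 M P) (mk2 N Q)
  | labs {M N} (x) : IRInd R false M N →
      IRInd R false (mk1 (Shape.labs x) M) (mk1 (Shape.labs x) N)
  | iabs {M N} (x) : IRInd R false M N →
      IRInd R false (mk1 (Shape.iabs x) M) (mk1 (Shape.iabs x) N)
  | cabs {M N} (x) : IRInd R false M N →
      IRInd R false (mk1 (Shape.cabs x) M) (mk1 (Shape.cabs x) N)
  | ibox {M N} : IRInd R false M N →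
      IRInd R false (mk1 Shape.ibox M) (mk1 Shape.ibox N)
  | cbox {M N} : IRInd R true M N →
      IRInd R false (mk1 Shape.cbox M) (mk1 Shape.cbox N)

def IRSys (b : Bool) (M N : T) : Prop :=
  ∃ S : Bool → T → T → Prop,
    (∀ b' M' N', S b' M' N' → IRInd (IRCo S) b' M' N') ∧ S b M N

/-- Infinitary reduction M ⇒ N. -/
def Inf (M N : T) : Prop := IRSys true M N

/-- Auxiliary relation M ⤳ N. -/
def Next (M N : T) : Prop := IRSys false M N

def NormalForm (N : T) : Prop := ∀ s P, ¬ Red s N P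

end LLInf
namespace LLInf

/-! ### The infinitary λ-calculus Λ_{00a} and its Girard-style embedding -/

/-- Inductive rules for membership in Λ_{00a}: when `a = true` the argument
premise goes through the coinductive guard `S`. -/
inductive LamStep (a : Bool) (S : T → Prop) : T → Prop
  | var (x) : LamStep a S (mk0 (Shape.var x))
  | app0 {M N} : a = false → LamStep a S M → LamStep a S N → LamStep a S (mk2 M N)
  | app1 {M N} : a = true → LamStep a S M → S N → LamStep a S (mk2 M N)
  | lam {M} (x) : LamStep a S M → LamStep a S (mk1 (Shape.labs x) M)

/-- `M` is a term of Λ_{00a} (the depth increasing in argument position iff `a`). -/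
def Lam00 (a : Bool) (M : T) : Prop :=
  ∃ S : T → Prop, (∀ N, S N → LamStep a S N) ∧ S M

/-- The Girard-style embedding ⟨·⟩ₐ of Λ_{00a} into ℓΛ∞, positionally:
⟨x⟩ = x, ⟨MN⟩ = ⟨M⟩(◻ₐ⟨N⟩), ⟨λx.M⟩ = λ◻ₐx.⟨M⟩. -/
def embF (a : Bool) : T → List ℕ → Option Shape
  | M, [] =>
      match M [] with
      | some (Shape.var x) => some (Shape.var x)
      | some Shape.app => some Shape.app
      | some (Shape.labs x) => some (if a then Shape.cabs x else Shape.iabs x)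
      | _ => none
  | M, i :: q =>
      match M [] with
      | some Shape.app =>
          if i = 0 then embF a (child M 0) q
          else if i = 1 then
            match q with
            | [] => some (if a then Shape.cbox else Shape.ibox)
            | j :: r => if j = 0 then embF a (child M 1) r else none
          else none
      | some (Shape.labs _) => if i = 0 then embF a (child M 0) q else none
      | _ => none
termination_by M p => p.length
decreasing_by all_goals (simp [List.length_cons]; try omega)

def emb (a : Bool) (M : T) : T := fun p => embF a M p

/-- Reduction at depth `n` in Λ_{00a}: the depth increases only when entering
the second argument of an application, and only when `a = true`. -/
inductive LRed (a : Bool) : ℕ → T → T → Prop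
  | beta (x M N) : LRed a 0 (mk2 (mk1 (Shape.labs x) M) N) (subst x N M)
  | appL {n M N} (P) : LRed a n M N → LRed a n (mk2 M P) (mk2 N P)
  | lam {n M N} (x) : LRed a n M N →
      LRed a n (mk1 (Shape.labs x) M) (mk1 (Shape.labs x) N)
  | appR0 {n M N} (P) : a = false → LRed a n M N → LRed a n (mk2 P M) (mk2 P N)
  | appR1 {n M N} (P) : a = true → LRed a n M N → LRed a (n + 1) (mk2 P M) (mk2 P N)

/-- The environment ◻ₐ(FV(M)): every free variable of `M`, marked inductive
(a = false) or coinductive (a = true). -/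
noncomputable def envOf (a : Bool) (M : T) : Env := fun y =>
  @ite _ (Free y M) (Classical.dec _) (some (if a then Pat.coi else Pat.ind)) none

/-- The defining (guarded) equations of capture-avoiding substitution. -/
def SubstEqs (f : ℕ → T → T → T) : Prop :=
  ∀ x (N : T),
    f x N (mk0 (Shape.var x)) = N ∧
    (∀ y, y ≠ x → f x N (mk0 (Shape.var y)) = mk0 (Shape.var y)) ∧
    (∀ M P, f x N (mk2 M P) = mk2 (f x N M) (f x N P)) ∧
    (∀ y M, y ≠ x → f x N (mk1 (Shape.labs y) M) = mk1 (Shape.labs y) (f x N M)) ∧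
    (∀ M, f x N (mk1 (Shape.labs x) M) = mk1 (Shape.labs x) M) ∧
    (∀ y M, y ≠ x → f x N (mk1 (Shape.iabs y) M) = mk1 (Shape.iabs y) (f x N M)) ∧
    (∀ M, f x N (mk1 (Shape.iabs x) M) = mk1 (Shape.iabs x) M) ∧
    (∀ y M, y ≠ x → f x N (mk1 (Shape.cabs y) M) = mk1 (Shape.cabs y) (f x N M)) ∧
    (∀ M, f x N (mk1 (Shape.cabs x) M) = mk1 (Shape.cabs x) M) ∧
    (∀ M, f x N (mk1 Shape.ibox M) = mk1 Shape.ibox (f x N M)) ∧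
    (∀ M, f x N (mk1 Shape.cbox M) = mk1 Shape.cbox (f x N M))

end LLInf
namespace LLInf

/-! ### The calculus ℓΛ∞^{4S} -/

/-- Patterns of ℓΛ∞^{4S}: x, ↓x, !x, ↑x, #x. -/
inductive Pat4 where
  | lin | dm | im | cm | am
deriving DecidableEq

def Env4 : Type := ℕ → Option Pat4

def Env4.upd (Γ : Env4) (x : ℕ) (p : Option Pat4) : Env4 :=
  fun y => if y = x then p else Γ y

/-- Patterns shared between the premises of applications: ↓, ↑, #. -/
def Shared4 (p : Option Pat4) : Prop :=
  p = some Pat4.dm ∨ p = some Pat4.cm ∨ p = some Pat4.am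

/-- Environment containing only ↓, ↑, # patterns. -/
def Passive4 (Γ : Env4) : Prop := ∀ y, Γ y = none ∨ Shared4 (Γ y)

def Split4 (Γ Γ₁ Γ₂ : Env4) : Prop := ∀ y,
  (Shared4 (Γ y) ∧ Γ₁ y = Γ y ∧ Γ₂ y = Γ y) ∨
  (Γ y = none ∧ Γ₁ y = none ∧ Γ₂ y = none) ∨
  ((Γ y = some Pat4.lin ∨ Γ y = some Pat4.im) ∧
    ((Γ₁ y = Γ y ∧ Γ₂ y = none) ∨ (Γ₂ y = Γ y ∧ Γ₁ y = none)))

/-- Environment transformation of the (mi) rule: conclusion ↓Θ,!Ξ,↑Ψ,#Φ ⊢ !M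
from premise Ξ,↑Ψ,#Φ ⊢ M. -/
def MiEnv (Γ Γ' : Env4) : Prop := ∀ y,
  (Γ y = some Pat4.im ∧ Γ' y = some Pat4.lin) ∨
  (Γ y = some Pat4.cm ∧ Γ' y = some Pat4.cm) ∨
  (Γ y = some Pat4.am ∧ Γ' y = some Pat4.am) ∨
  (Γ y = some Pat4.dm ∧ Γ' y = none) ∨
  (Γ y = none ∧ Γ' y = none)

/-- Environment transformation of the coinductive (mc) rule: conclusion
↓Θ,↑Ξ,#Ψ ⊢ §M from premise #Ξ,#Ψ ⊢ M. -/
def McEnv (Γ Γ' : Env4) : Prop := ∀ y,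
  (Γ y = some Pat4.cm ∧ Γ' y = some Pat4.am) ∨
  (Γ y = some Pat4.am ∧ Γ' y = some Pat4.am) ∨
  (Γ y = some Pat4.dm ∧ Γ' y = none) ∨
  (Γ y = none ∧ Γ' y = none)

/-- The inductive well-formation rules of ℓΛ∞^{4S}. -/
inductive WF4Step (R : Env4 → T → Prop) : Env4 → T → Prop
  | base {Γ M} : R Γ M → WF4Step R Γ M
  | vl {Γ} (x) : Γ x = some Pat4.lin → Passive4 (Γ.upd x none) →
      WF4Step R Γ (mk0 (Shape.var x))
  | vd {Γ} (x) : Γ x = some Pat4.dm → Passive4 Γ → WF4Step R Γ (mk0 (Shape.var x))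
  | va {Γ} (x) : Γ x = some Pat4.am → Passive4 Γ → WF4Step R Γ (mk0 (Shape.var x))
  | app {Γ Γ₁ Γ₂ M N} : Split4 Γ Γ₁ Γ₂ → WF4Step R Γ₁ M → WF4Step R Γ₂ N →
      WF4Step R Γ (mk2 M N)
  | ll {Γ x M} : Γ x = none → WF4Step R (Γ.upd x (some Pat4.lin)) M →
      WF4Step R Γ (mk1 (Shape.labs x) M)
  | li1 {Γ x M} : Γ x = none → WF4Step R (Γ.upd x (some Pat4.dm)) M →
      WF4Step R Γ (mk1 (Shape.iabs x) M)
  | li2 {Γ x M} : Γ x = none → WF4Step R (Γ.upd x (some Pat4.im)) M →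
      WF4Step R Γ (mk1 (Shape.iabs x) M)
  | lc {Γ x M} : Γ x = none → WF4Step R (Γ.upd x (some Pat4.cm)) M →
      WF4Step R Γ (mk1 (Shape.cabs x) M)
  | mi {Γ Γ' M} : MiEnv Γ Γ' → WF4Step R Γ' M → WF4Step R Γ (mk1 Shape.ibox M)

/-- One application of the coinductive rule (mc) of ℓΛ∞^{4S}. -/
def CoStep4 (S : Env4 → T → Prop) (Γ : Env4) (M : T) : Prop :=
  ∃ Γ' N, McEnv Γ Γ' ∧ M = mk1 Shape.cbox N ∧ S Γ' N

/-- Well-formation in ℓΛ∞^{4S}. -/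
def WF4 (Γ : Env4) (M : T) : Prop :=
  ∃ S : Env4 → T → Prop, (∀ Δ N, S Δ N → WF4Step (CoStep4 S) Δ N) ∧ S Γ M

/-! ### Sizes, free occurrences, duplicability factors and weights -/

/-- The defining equations of the size |M|ₘ at depth m, as a relation. -/
inductive SizeRel : T → ℕ → ℕ → Prop
  | var0 (x) : SizeRel (mk0 (Shape.var x)) 0 1
  | ibox0 {M n} : SizeRel M 0 n → SizeRel (mk1 Shape.ibox M) 0 (n + 1)
  | cbox0 (M) : SizeRel (mk1 Shape.cbox M) 0 0
  | app0 {M N n p} : SizeRel M 0 n → SizeRel N 0 p →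
      SizeRel (mk2 M N) 0 (n + p + 1)
  | labs0 {M n} (x) : SizeRel M 0 n → SizeRel (mk1 (Shape.labs x) M) 0 (n + 1)
  | iabs0 {M n} (x) : SizeRel M 0 n → SizeRel (mk1 (Shape.iabs x) M) 0 (n + 1)
  | cabs0 {M n} (x) : SizeRel M 0 n → SizeRel (mk1 (Shape.cabs x) M) 0 (n + 1)
  | varS (x m) : SizeRel (mk0 (Shape.var x)) (m + 1) 0
  | iboxS {M m n} : SizeRel M (m + 1) n → SizeRel (mk1 Shape.ibox M) (m + 1) n
  | cboxS {M m n} : SizeRel M m n → SizeRel (mk1 Shape.cbox M) (m + 1) n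
  | appS {M N m n p} : SizeRel M (m + 1) n → SizeRel N (m + 1) p →
      SizeRel (mk2 M N) (m + 1) (n + p)
  | labsS {M m n} (x) : SizeRel M (m + 1) n → SizeRel (mk1 (Shape.labs x) M) (m + 1) n
  | iabsS {M m n} (x) : SizeRel M (m + 1) n → SizeRel (mk1 (Shape.iabs x) M) (m + 1) n
  | cabsS {M m n} (x) : SizeRel M (m + 1) n → SizeRel (mk1 (Shape.cabs x) M) (m + 1) n

/-- Number of free occurrences of `x`, as a relation. -/
inductive NFO (x : ℕ) : T → ℕ → Prop
  | varEq : NFO x (mk0 (Shape.var x)) 1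
  | varNe {y} : y ≠ x → NFO x (mk0 (Shape.var y)) 0
  | app {M N n p} : NFO x M n → NFO x N p → NFO x (mk2 M N) (n + p)
  | labsSh (M) : NFO x (mk1 (Shape.labs x) M) 0
  | labs {y M n} : y ≠ x → NFO x M n → NFO x (mk1 (Shape.labs y) M) n
  | iabsSh (M) : NFO x (mk1 (Shape.iabs x) M) 0
  | iabs {y M n} : y ≠ x → NFO x M n → NFO x (mk1 (Shape.iabs y) M) n
  | cabsSh (M) : NFO x (mk1 (Shape.cabs x) M) 0
  | cabs {y M n} : y ≠ x → NFO x M n → NFO x (mk1 (Shape.cabs y) M) n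
  | ibox {M n} : NFO x M n → NFO x (mk1 Shape.ibox M) n
  | cbox {M n} : NFO x M n → NFO x (mk1 Shape.cbox M) n
  | cboxNot {M} : ¬ Free x M → NFO x (mk1 Shape.cbox M) 0

/-- The defining equations of the duplicability factor Dₘ(M), as a relation. -/
inductive DRel : T → ℕ → ℕ → Prop
  | var0 (x) : DRel (mk0 (Shape.var x)) 0 1
  | ibox0 {M d} : DRel M 0 d → DRel (mk1 Shape.ibox M) 0 d
  | cbox0 (M) : DRel (mk1 Shape.cbox M) 0 1
  | app0 {M N d e} : DRel M 0 d → DRel N 0 e → DRel (mk2 M N) 0 (max d e)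
  | labs0 {M d} (x) : DRel M 0 d → DRel (mk1 (Shape.labs x) M) 0 d
  | cabs0 {M d} (x) : DRel M 0 d → DRel (mk1 (Shape.cabs x) M) 0 d
  | iabs0 {x M k d} : NFO x M k → DRel M 0 d →
      DRel (mk1 (Shape.iabs x) M) 0 (max k d)
  | varS (x m) : DRel (mk0 (Shape.var x)) (m + 1) 1
  | iboxS {M m d} : DRel M (m + 1) d → DRel (mk1 Shape.ibox M) (m + 1) d
  | cboxS {M m d} : DRel M m d → DRel (mk1 Shape.cbox M) (m + 1) d
  | appS {M N m d e} : DRel M (m + 1) d → DRel N (m + 1) e →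
      DRel (mk2 M N) (m + 1) (max d e)
  | labsS {M m d} (x) : DRel M (m + 1) d → DRel (mk1 (Shape.labs x) M) (m + 1) d
  | iabsS {M m d} (x) : DRel M (m + 1) d → DRel (mk1 (Shape.iabs x) M) (m + 1) d
  | cabsS {M m d} (x) : DRel M (m + 1) d → DRel (mk1 (Shape.cabs x) M) (m + 1) d

/-- The defining equations of the n-weight wⁿₘ(M), as a relation. -/
inductive WRel (n : ℕ) : T → ℕ → ℕ → Prop
  | var0 (x) : WRel n (mk0 (Shape.var x)) 0 1
  | ibox0 {M w} : WRel n M 0 w → WRel n (mk1 Shape.ibox M) 0 (n * w)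
  | cbox0 (M) : WRel n (mk1 Shape.cbox M) 0 0
  | app0 {M N w v} : WRel n M 0 w → WRel n N 0 v → WRel n (mk2 M N) 0 (w + v)
  | labs0 {M w} (x) : WRel n M 0 w → WRel n (mk1 (Shape.labs x) M) 0 (w + 1)
  | iabs0 {M w} (x) : WRel n M 0 w → WRel n (mk1 (Shape.iabs x) M) 0 (w + 1)
  | cabs0 {M w} (x) : WRel n M 0 w → WRel n (mk1 (Shape.cabs x) M) 0 (w + 1)
  | varS (x m) : WRel n (mk0 (Shape.var x)) (m + 1) 0
  | iboxS {M m w} : WRel n M (m + 1) w → WRel n (mk1 Shape.ibox M) (m + 1) w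
  | cboxS {M m w} : WRel n M m w → WRel n (mk1 Shape.cbox M) (m + 1) w
  | appS {M N m w v} : WRel n M (m + 1) w → WRel n N (m + 1) v →
      WRel n (mk2 M N) (m + 1) (w + v)
  | labsS {M m w} (x) : WRel n M (m + 1) w → WRel n (mk1 (Shape.labs x) M) (m + 1) w
  | iabsS {M m w} (x) : WRel n M (m + 1) w → WRel n (mk1 (Shape.iabs x) M) (m + 1) w
  | cabsS {M m w} (x) : WRel n M (m + 1) w → WRel n (mk1 (Shape.cabs x) M) (m + 1) w

/-- Wₘ(M) = w^{Dₘ(M)}ₘ(M): the weight of `M` at depth `m`. -/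
def TW (M : T) (m w : ℕ) : Prop := ∃ d, DRel M m d ∧ WRel d M m w

end LLInf

namespace LLInf

/-! The embedding commutes with the term constructors, ⟨M N⟩ₐ = ⟨M⟩ₐ (◻ₐ⟨N⟩ₐ) and ⟨λx.M⟩ₐ =
λ◻ₐx.⟨M⟩ₐ, and with substitution (by a bisimulation, terms being infinite trees). Hence a β-redex of
Λ_{00a} is sent to an (ind) or (coi) redex with the embedded contractum, and a reduction context is
sent to a context that crosses one box ◻ₐ each time the original context enters an argument. These
boxes are coinductive exactly when `a = true`, which is also exactly when entering an argument
increases the depth. Conversely, the image of the embedding has no redexes or contexts other than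
these, so every step of ⟨M⟩ₐ is the image of a step of M. -/

@[simp] theorem mk1_inj_iff {s t : Shape} {A B : T} : mk1 s A = mk1 t B ↔ s = t ∧ A = B :=
  ⟨fun h => ⟨by simpa [mk1] using congrFun h [], funext fun p => congrFun h (0 :: p)⟩,
    by rintro ⟨rfl, rfl⟩; rfl⟩

@[simp] theorem mk2_inj_iff {A B A' B' : T} : mk2 A B = mk2 A' B' ↔ A = A' ∧ B = B' :=
  ⟨fun h => ⟨funext fun p => congrFun h (0 :: p), funext fun p => congrFun h (1 :: p)⟩,
    by rintro ⟨rfl, rfl⟩; rfl⟩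

theorem mk0_ne_mk1 {s t : Shape} (A : T) (h : s ≠ t) : mk0 s ≠ mk1 t A := by
  intro e; simpa [mk0, mk1, h] using congrFun e []

theorem mk0_ne_mk2 {s : Shape} (A B : T) (h : s ≠ Shape.app) : mk0 s ≠ mk2 A B := by
  intro e; simpa [mk0, mk2, h] using congrFun e []

theorem mk1_ne_mk2 {s : Shape} (A B C : T) (h : s ≠ Shape.app) : mk1 s A ≠ mk2 B C := by
  intro e; simpa [mk1, mk2, h] using congrFun e []

@[simp] theorem child_mk1_zero (s : Shape) (A : T) : child (mk1 s A) 0 = A := rfl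

@[simp] theorem child_mk2_zero (A B : T) : child (mk2 A B) 0 = A := rfl

@[simp] theorem child_mk2_one (A B : T) : child (mk2 A B) 1 = B := rfl

theorem eq_of_bisim (R : T → T → Prop)
    (hR : ∀ A B, R A B → A = B ∨ (∃ t A' B', A = mk1 t A' ∧ B = mk1 t B' ∧ R A' B') ∨
      ∃ A₁ A₂ B₁ B₂, A = mk2 A₁ A₂ ∧ B = mk2 B₁ B₂ ∧ R A₁ B₁ ∧ R A₂ B₂)
    {A B : T} (h : R A B) : A = B := by
  funext p
  induction p generalizing A B with
  | nil =>
    rcases hR A B h with rfl | ⟨t, A', B', rfl, rfl, -⟩ | ⟨A₁, A₂, B₁, B₂, rfl, rfl, -⟩ <;>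
      rfl
  | cons i q ih =>
    rcases hR A B h with
      rfl | ⟨t, A', B', rfl, rfl, h'⟩ | ⟨A₁, A₂, B₁, B₂, rfl, rfl, h₁, h₂⟩
    · rfl
    · rcases i with _ | i
      exacts [ih h', rfl]
    · rcases i with _ | _ | i
      exacts [ih h₁, ih h₂, rfl]

section Subst

variable {x : ℕ} (N : T)

theorem subst_of_forall_eq_none {M : T} (h : ∀ p, M p = none) : subst x N M = M := by
  funext p
  induction p generalizing M with
  | nil => simp [subst, substF, h]
  | cons i q ih => simpa [subst, substF, h, bindsX, child] using ih (M := child M i) fun p => h _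

theorem subst_of_bindsX {M : T} (hb : bindsX x (M []) = true) : subst x N M = M := by
  funext p
  have hv : M [] ≠ some (Shape.var x) := by
    intro h; simp [h, bindsX] at hb
  cases p <;> simp [subst, substF, hv, hb]

theorem subst_var_self : subst x N (mk0 (Shape.var x)) = N := by
  funext p
  cases p <;> simp [subst, substF, mk0]

theorem subst_var_of_ne {y : ℕ} (h : y ≠ x) :
    subst x N (mk0 (Shape.var y)) = mk0 (Shape.var y) := by
  funext p
  rcases p with _ | ⟨i, q⟩
  · simp [subst, substF, mk0, h]
  · have := congrFun (subst_of_forall_eq_none (x := x) N (M := child (mk0 (Shape.var y)) i)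
      fun p => by simp [child, mk0]) q
    simpa [subst, substF, mk0, h, bindsX, child] using this

theorem subst_mk2 (A B : T) : subst x N (mk2 A B) = mk2 (subst x N A) (subst x N B) := by
  funext p
  rcases p with _ | ⟨_ | _ | i, q⟩
  · simp [subst, substF, mk2]
  · simp [subst, substF, mk2, bindsX]
  · simp [subst, substF, mk2, bindsX]
  · have := congrFun (subst_of_forall_eq_none (x := x) N (M := child (mk2 A B) (i + 2))
      fun p => rfl) q
    simpa [subst, substF, mk2, bindsX, child] using this

theorem subst_mk1 {t : Shape} (A : T) (hv : t ≠ Shape.var x) (hb : bindsX x (some t) = false) :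
    subst x N (mk1 t A) = mk1 t (subst x N A) := by
  funext p
  rcases p with _ | ⟨_ | i, q⟩
  · simp [subst, substF, mk1, hv]
  · simp [subst, substF, mk1, hv, hb]
  · have := congrFun (subst_of_forall_eq_none (x := x) N (M := child (mk1 t A) (i + 1))
      fun p => rfl) q
    simpa [subst, substF, mk1, hv, hb, child] using this

end Subst

/-- The box ◻ₐ. -/
def Shape.boxOf : Bool → Shape
  | false => Shape.ibox
  | true => Shape.cbox

/-- The binder λ◻ₐx. -/
def Shape.absOf : Bool → ℕ → Shape
  | false, x => Shape.iabs x
  | true, x => Shape.cabs x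

theorem emb_var (a : Bool) (x : ℕ) : emb a (mk0 (Shape.var x)) = mk0 (Shape.var x) := by
  funext p
  rcases p with _ | ⟨i, _ | ⟨j, r⟩⟩ <;> simp [emb, embF, mk0]

theorem emb_mk2 (a : Bool) (M N : T) :
    emb a (mk2 M N) = mk2 (emb a M) (mk1 (Shape.boxOf a) (emb a N)) := by
  funext p
  rcases p with _ | ⟨_ | _ | i, _ | ⟨_ | j, r⟩⟩ <;> cases a <;>
    simp [emb, embF, mk2, mk1, Shape.boxOf]

theorem emb_lam (a : Bool) (x : ℕ) (M : T) :
    emb a (mk1 (Shape.labs x) M) = mk1 (Shape.absOf a x) (emb a M) := by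
  funext p
  rcases p with _ | ⟨_ | i, _ | ⟨j, r⟩⟩ <;> cases a <;> simp [emb, embF, mk1, Shape.absOf]

section Embedding

variable {a : Bool}

theorem Lam00.eq_var_or_app_or_lam {M : T} (h : Lam00 a M) :
    (∃ x, M = mk0 (Shape.var x)) ∨
    (∃ M₁ M₂, M = mk2 M₁ M₂ ∧ Lam00 a M₁ ∧ Lam00 a M₂) ∨
    ∃ x M₁, M = mk1 (Shape.labs x) M₁ ∧ Lam00 a M₁ := by
  obtain ⟨S, hS, hM⟩ := h
  have step_closed : ∀ N, LamStep a S N → LamStep a (LamStep a S) N := by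
    intro N hN
    induction hN with
    | var x => exact .var x
    | app0 ha _ _ ih₁ ih₂ => exact .app0 ha ih₁ ih₂
    | app1 ha _ hN ih => exact .app1 ha ih (hS _ hN)
    | lam x _ ih => exact .lam x ih
  have of_step : ∀ {N}, LamStep a S N → Lam00 a N := fun hN => ⟨_, step_closed, hN⟩
  cases hS M hM with
  | var x => exact .inl ⟨x, rfl⟩
  | app0 _ h₁ h₂ => exact .inr (.inl ⟨_, _, rfl, of_step h₁, of_step h₂⟩)
  | app1 _ h₁ h₂ => exact .inr (.inl ⟨_, _, rfl, of_step h₁, ⟨S, hS, h₂⟩⟩)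
  | lam x h₁ => exact .inr (.inr ⟨x, _, rfl, of_step h₁⟩)

theorem Lam00.of_mk2 {M N : T} (h : Lam00 a (mk2 M N)) : Lam00 a M ∧ Lam00 a N := by
  rcases h.eq_var_or_app_or_lam with ⟨x, e⟩ | ⟨M₁, M₂, e, h₁, h₂⟩ | ⟨x, M₁, e, -⟩
  · exact absurd e.symm (mk0_ne_mk2 _ _ (by simp))
  · obtain ⟨rfl, rfl⟩ := mk2_inj_iff.1 e
    exact ⟨h₁, h₂⟩
  · exact absurd e.symm (mk1_ne_mk2 _ _ _ (by simp))

theorem Lam00.of_lam {x : ℕ} {M : T} (h : Lam00 a (mk1 (Shape.labs x) M)) : Lam00 a M := by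
  rcases h.eq_var_or_app_or_lam with ⟨y, e⟩ | ⟨M₁, M₂, e, -⟩ | ⟨y, M₁, e, h₁⟩
  · exact absurd e.symm (mk0_ne_mk1 _ (by simp))
  · exact absurd e (mk1_ne_mk2 _ _ _ (by simp))
  · rw [(mk1_inj_iff.1 e).2]
    exact h₁

theorem emb_eq_mk2 {M A B : T} (hM : Lam00 a M) (h : emb a M = mk2 A B) :
    ∃ M₁ M₂, M = mk2 M₁ M₂ ∧ A = emb a M₁ ∧ B = mk1 (Shape.boxOf a) (emb a M₂) := by
  rcases hM.eq_var_or_app_or_lam with ⟨x, rfl⟩ | ⟨M₁, M₂, rfl, -⟩ | ⟨x, M₁, rfl, -⟩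
  · exact absurd h (by rw [emb_var]; exact mk0_ne_mk2 _ _ (by simp))
  · rw [emb_mk2, mk2_inj_iff] at h
    exact ⟨M₁, M₂, rfl, h.1.symm, h.2.symm⟩
  · exact absurd h (by rw [emb_lam]; exact mk1_ne_mk2 _ _ _ (by cases a <;> simp [Shape.absOf]))

theorem emb_eq_mk1 {t : Shape} {M A : T} (hM : Lam00 a M) (ht : arity t = 1)
    (h : emb a M = mk1 t A) :
    ∃ x M₁, M = mk1 (Shape.labs x) M₁ ∧ t = Shape.absOf a x ∧ A = emb a M₁ := by
  rcases hM.eq_var_or_app_or_lam with ⟨x, rfl⟩ | ⟨M₁, M₂, rfl, -⟩ | ⟨x, M₁, rfl, -⟩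
  · exact absurd h (by rw [emb_var]; exact mk0_ne_mk1 _ fun e => by simp [← e, arity] at ht)
  · exact absurd h.symm (by rw [emb_mk2]; exact mk1_ne_mk2 _ _ _ fun e => by simp [e, arity] at ht)
  · rw [emb_lam, mk1_inj_iff] at h
    exact ⟨x, M₁, rfl, h.1.symm, h.2.symm⟩

theorem emb_subst (x : ℕ) (N : T) {M : T} (hM : Lam00 a M) :
    emb a (subst x N M) = subst x (emb a N) (emb a M) := by
  set P : T → T := fun M => emb a (subst x N M)
  set Q : T → T := fun M => subst x (emb a N) (emb a M)
  -- The boxed pairs are the argument subtrees of embedded applications.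
  refine eq_of_bisim (fun A B => A = B ∨ ∃ M, Lam00 a M ∧
    ((A = P M ∧ B = Q M) ∨ (A = mk1 (Shape.boxOf a) (P M) ∧ B = mk1 (Shape.boxOf a) (Q M))))
    ?_ (.inr ⟨M, hM, .inl ⟨rfl, rfl⟩⟩)
  rintro A B (rfl | ⟨M, hM, ⟨rfl, rfl⟩ | ⟨rfl, rfl⟩⟩)
  · exact .inl rfl
  · rcases hM.eq_var_or_app_or_lam with ⟨y, rfl⟩ | ⟨M₁, M₂, rfl, h₁, h₂⟩ | ⟨y, M₁, rfl, h₁⟩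
    · left
      by_cases hy : y = x
      · simp [P, Q, hy, emb_var, subst_var_self]
      · simp [P, Q, emb_var, subst_var_of_ne _ hy]
    · refine .inr (.inr ⟨_, _, _, _, by simp only [P, subst_mk2, emb_mk2], ?_,
        .inr ⟨M₁, h₁, .inl ⟨rfl, rfl⟩⟩, .inr ⟨M₂, h₂, .inr ⟨rfl, rfl⟩⟩⟩)
      simp only [Q, emb_mk2, subst_mk2]
      rw [subst_mk1 _ _ (by cases a <;> simp [Shape.boxOf]) (by cases a <;> rfl)]
    · by_cases hy : y = x
      · subst hy
        left
        simp only [P, Q, emb_lam]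
        rw [subst_of_bindsX _ (by simp [mk1, bindsX]),
          subst_of_bindsX _ (by cases a <;> simp [Shape.absOf, mk1, bindsX]), emb_lam]
      · refine .inr (.inl ⟨Shape.absOf a y, _, _, ?_, ?_, .inr ⟨M₁, h₁, .inl ⟨rfl, rfl⟩⟩⟩)
        · simp only [P]
          rw [subst_mk1 _ _ (by simp) (by simp [bindsX, hy]), emb_lam]
        · simp only [Q, emb_lam]
          rw [subst_mk1 _ _ (by cases a <;> simp [Shape.absOf])
            (by cases a <;> simp [Shape.absOf, bindsX, hy])]
  · exact .inr (.inl ⟨_, _, _, rfl, rfl, .inr ⟨M, hM, .inl ⟨rfl, rfl⟩⟩⟩)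

end Embedding

theorem Red.boxOf {s : List Bool} {A B : T} (a : Bool) (h : Red s A B) :
    Red (a :: s) (mk1 (Shape.boxOf a) A) (mk1 (Shape.boxOf a) B) := by
  cases a
  exacts [h.ibox, h.cbox]

theorem Red.absOf {s : List Bool} {A B : T} (a : Bool) (x : ℕ) (h : Red s A B) :
    Red s (mk1 (Shape.absOf a x) A) (mk1 (Shape.absOf a x) B) := by
  cases a
  exacts [h.iabs x, h.cabs x]

theorem Basic.exists_eq_mk2 {E N : T} (h : Basic E N) : ∃ A B, E = mk2 A B := by
  cases h <;> exact ⟨_, _, rfl⟩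

theorem LRed.mk2_right {a : Bool} {s : List Bool} {M N : T} (P : T)
    (h : LRed a (s.count true) M N) : LRed a ((a :: s).count true) (mk2 P M) (mk2 P N) := by
  cases a
  exacts [by simpa using h.appR0 P rfl, by simpa using h.appR1 P rfl]

section Simulation

variable {a : Bool}

theorem basic_emb_beta (x : ℕ) (N : T) {M : T} (hM : Lam00 a M) :
    Basic (emb a (mk2 (mk1 (Shape.labs x) M) N)) (emb a (subst x N M)) := by
  rw [emb_mk2, emb_lam, emb_subst x N hM]
  cases a
  exacts [.ind x _ _, .coi x _ _]

theorem LRed.redAt_emb {n : ℕ} {M N : T} (h : LRed a n M N) (hM : Lam00 a M) :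
    RedAt n (emb a M) (emb a N) := by
  induction h with
  | beta x M N => exact ⟨[], rfl, .base (basic_emb_beta x N hM.of_mk2.1.of_lam)⟩
  | appL P _ ih =>
    obtain ⟨s, hs, h⟩ := ih hM.of_mk2.1
    exact ⟨s, hs, by simpa only [emb_mk2] using h.appL _⟩
  | lam x _ ih =>
    obtain ⟨s, hs, h⟩ := ih hM.of_lam
    exact ⟨s, hs, by simpa only [emb_lam] using h.absOf a x⟩
  | appR0 P ha _ ih | appR1 P ha _ ih =>
    obtain ⟨s, rfl, h⟩ := ih hM.of_mk2.2
    exact ⟨a :: s, by simp [ha], by simpa only [emb_mk2] using (h.boxOf a).appR _⟩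

theorem exists_redex_of_basic_emb {M N : T} (hM : Lam00 a M) (h : Basic (emb a M) N) :
    ∃ x P Q, M = mk2 (mk1 (Shape.labs x) P) Q ∧ N = emb a (subst x Q P) := by
  generalize hE : emb a M = E at h
  cases h with
  | lin x A B =>
    obtain ⟨M₁, Q, rfl, h₁, -⟩ := emb_eq_mk2 hM hE
    obtain ⟨y, P, -, ht, -⟩ := emb_eq_mk1 hM.of_mk2.1 rfl h₁.symm
    cases a <;> simp [Shape.absOf] at ht
  | ind x A B | coi x A B =>
    obtain ⟨M₁, Q, rfl, h₁, hQ⟩ := emb_eq_mk2 hM hE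
    obtain ⟨y, P, rfl, ht, rfl⟩ := emb_eq_mk1 hM.of_mk2.1 rfl h₁.symm
    have hP := hM.of_mk2.1.of_lam
    cases a <;> simp only [Shape.absOf, Shape.boxOf, Shape.iabs.injEq, Shape.cabs.injEq,
      mk1_inj_iff, reduceCtorEq, true_and] at ht hQ
    all_goals
      subst ht hQ
      exact ⟨x, P, Q, rfl, (emb_subst x Q hP).symm⟩

/- The second conjunct covers the argument subterm ◻ₐ⟨M₂⟩ of an embedded application, which is
not itself in the image of the embedding. -/
theorem Red.exists_lred_of_emb {s : List Bool} {E N : T} (hr : Red s E N) :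
    ∀ M, Lam00 a M →
      (E = emb a M → ∃ L, LRed a (s.count true) M L ∧ emb a L = N) ∧
      (E = mk1 (Shape.boxOf a) (emb a M) → ∃ s' L, s = a :: s' ∧
        LRed a (s'.count true) M L ∧ N = mk1 (Shape.boxOf a) (emb a L)) := by
  induction hr with
  | base h =>
    refine fun M hM => ⟨fun hE => ?_, fun hE => ?_⟩
    · obtain ⟨x, P, Q, rfl, rfl⟩ := exists_redex_of_basic_emb hM (hE ▸ h)
      exact ⟨_, by simpa using LRed.beta x P Q, rfl⟩
    · obtain ⟨A, B, hAB⟩ := h.exists_eq_mk2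
      exact absurd (hE.symm.trans hAB) (mk1_ne_mk2 _ _ _ (by cases a <;> simp [Shape.boxOf]))
  | appL P _ ih =>
    refine fun M hM => ⟨fun hE => ?_, fun hE => ?_⟩
    · obtain ⟨M₁, M₂, rfl, rfl, rfl⟩ := emb_eq_mk2 hM hE.symm
      obtain ⟨L, hL, rfl⟩ := (ih M₁ hM.of_mk2.1).1 rfl
      exact ⟨mk2 L M₂, hL.appL _, emb_mk2 _ _ _⟩
    · exact absurd hE.symm (mk1_ne_mk2 _ _ _ (by cases a <;> simp [Shape.boxOf]))
  | appR P _ ih =>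
    refine fun M hM => ⟨fun hE => ?_, fun hE => ?_⟩
    · obtain ⟨M₁, M₂, rfl, rfl, hB⟩ := emb_eq_mk2 hM hE.symm
      obtain ⟨s', L, rfl, hL, rfl⟩ := (ih M₂ hM.of_mk2.2).2 hB
      exact ⟨mk2 M₁ L, hL.mk2_right _, emb_mk2 _ _ _⟩
    · exact absurd hE.symm (mk1_ne_mk2 _ _ _ (by cases a <;> simp [Shape.boxOf]))
  | labs x _ ih | iabs x _ ih | cabs x _ ih =>
    refine fun M hM => ⟨fun hE => ?_, fun hE => ?_⟩
    · obtain ⟨y, M₁, rfl, ht, rfl⟩ := emb_eq_mk1 hM rfl hE.symm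
      obtain ⟨L, hL, rfl⟩ := (ih M₁ hM.of_lam).1 rfl
      exact ⟨mk1 (Shape.labs y) L, hL.lam y, by rw [emb_lam, ht]⟩
    · cases a <;> simp [Shape.boxOf] at hE
  | ibox _ ih | cbox _ ih =>
    refine fun M hM => ⟨fun hE => ?_, fun hE => ?_⟩
    · obtain ⟨y, M₁, -, ht, -⟩ := emb_eq_mk1 hM rfl hE.symm
      cases a <;> simp [Shape.absOf] at ht
    · cases a <;> simp only [Shape.boxOf, mk1_inj_iff, reduceCtorEq, false_and, true_and] at hE
      all_goals
        obtain ⟨L, hL, rfl⟩ := (ih M hM).1 hE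
        exact ⟨_, L, rfl, hL, rfl⟩

end Simulation

/-- Perfect simulation: a depth-`n` step of Λ_{00a} is simulated by one step of
ℓΛ∞ at a level with exactly `n` coinductive boxes, and conversely every step
from ⟨M⟩ₐ comes from a step of M. -/
theorem perfect_simulation (a : Bool) :
    (∀ M N : T, ∀ n : ℕ, Lam00 a M → LRed a n M N →
      ∃ s : List Bool, s.count true = n ∧ Red s (emb a M) (emb a N)) ∧
    (∀ M : T, ∀ N : T, ∀ s : List Bool, Lam00 a M → Red s (emb a M) N →
      ∃ L : T, LRed a (s.count true) M L ∧ emb a L = N) :=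
  ⟨fun _ _ _ hM h => h.redAt_emb hM, fun M _ _ hM h => (h.exists_lred_of_emb M hM).1 rfl⟩

end LLInf
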